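/- arXiv:1402.0934 — 2 statements merged into one kernel-verified Lean document; each statement's English description precedes it below -/
import Mathlib

section
/- Let (X_1, X_2) have the following mixture law with c_1 = 2 + √2: with probability 1/c_1 the vector is (U, 0) with U ~ Uniform(0,1]; with probability 1/c_1 it is (0, U) with U ~ Uniform(0,1]; and with probability √2/c_1 it is (V, V) where V has distribution function G_1. Then for every s ∈ (0,1), P(N_{s,2} = 1)/P(N_{s,2} ≥ 2) = √2 (1 − s)/(1 − G_1(s)), and P(N_{s,2} = 2 | N_{s,2} ≥ 2) = 1, so FD_{2,2} exists and is degenerate at 2; however, lim_{s↑1} P(N_{s,2} = 1 | N_{s,2} ≥ 1) does not exist, so FD_{2,1} does not exist. -/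
/-!
Under `law2` a level `s ∈ (0,1)` is exceeded by exactly one coordinate only through the two
axis components and by both only through the diagonal one, so `P(N = 1) = 2 (1 - s) / c₁` and
`P(N ≥ 2) = P(N = 2) = √2 (1 - G₁ s) / c₁`. The density `g₁` is `2` on the blocks
`[1 - 2⁻ᵏ, 1 - 3·2^{-(k+2)}]` of length `2^{-(k+2)}`, so the tail `1 - G₁ s` equals `1 - s` at the
left end of every block but only `(2/3)(1 - s)` at its right end. Hence
`P(N = 1 | N ≥ 1) = 2 (1 - s) / (2 (1 - s) + √2 (1 - G₁ s))` takes two different constant values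
along the two sequences of block ends, which both tend to `1`.
-/

open MeasureTheory Filter Set Topology Classical

/-- Conditional probability `P(A | B)` as a real number. -/
noncomputable def condP {Ω : Type*} [MeasurableSpace Ω] (μ : Measure Ω) (A B : Set Ω) : ℝ :=
  (μ (A ∩ B)).toReal / (μ B).toReal

/-- The density `g₁` on `[0,1]`. -/
noncomputable def g1 (y : ℝ) : ℝ :=
  if ∃ k : ℕ, 1 - 1 / 2 ^ k ≤ y ∧ y ≤ 1 - 3 / 2 ^ (k + 2) then 2 else 0

/-- The distribution function of `g₁`. -/
noncomputable def G1 (y : ℝ) : ℝ := ∫ t in (0:ℝ)..y, g1 t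

/-- The uniform distribution on `(0,1]`. -/
noncomputable def unif : Measure ℝ := volume.restrict (Set.Ioc 0 1)

/-- The law with density `g₁`. -/
noncomputable def nuG1 : Measure ℝ := volume.withDensity fun t => ENNReal.ofReal (g1 t)

/-- The mixture law of `(X₁, X₂)` with `c₁ = 2 + √2`. -/
noncomputable def law2 : Measure (ℝ × ℝ) :=
  ENNReal.ofReal (1 / (2 + Real.sqrt 2)) • Measure.map (fun u => (u, (0:ℝ))) unif +
  ENNReal.ofReal (1 / (2 + Real.sqrt 2)) • Measure.map (fun u => ((0:ℝ), u)) unif +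
  ENNReal.ofReal (Real.sqrt 2 / (2 + Real.sqrt 2)) • Measure.map (fun v => (v, v)) nuG1

open scoped ENNReal
open Function

noncomputable section

lemma not_exists_tendsto_of_tendsto_of_eventually_eq {α β γ : Type*} [TopologicalSpace β]
    [T2Space β] {f : α → β} {l : Filter α} {la : Filter γ} [la.NeBot] {u v : γ → α} {a b : β}
    (hu : Tendsto u la l) (hv : Tendsto v la l) (hfu : ∀ᶠ n in la, f (u n) = a)
    (hfv : ∀ᶠ n in la, f (v n) = b) (hab : a ≠ b) : ¬ ∃ L, Tendsto f l (𝓝 L) := by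
  rintro ⟨L, hL⟩
  exact hab ((tendsto_nhds_unique ((hL.comp hu).congr' hfu) tendsto_const_nhds).symm.trans
    (tendsto_nhds_unique ((hL.comp hv).congr' hfv) tendsto_const_nhds))

def g1BlockLeft (k : ℕ) : ℝ := 1 - 1 / 2 ^ k

def g1BlockRight (k : ℕ) : ℝ := 1 - 3 / 2 ^ (k + 2)

def g1Block (k : ℕ) : Set ℝ := Icc (g1BlockLeft k) (g1BlockRight k)

def g1Support : Set ℝ := ⋃ k, g1Block k

lemma g1BlockRight_sub_g1BlockLeft (k : ℕ) :
    g1BlockRight k - g1BlockLeft k = 1 / 2 ^ (k + 2) := by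
  rw [g1BlockRight, g1BlockLeft, pow_add]
  field_simp
  ring

lemma g1BlockLeft_le_g1BlockRight (k : ℕ) : g1BlockLeft k ≤ g1BlockRight k :=
  sub_nonneg.1 (g1BlockRight_sub_g1BlockLeft k ▸ by positivity)

lemma g1BlockRight_lt_g1BlockLeft_succ (k : ℕ) : g1BlockRight k < g1BlockLeft (k + 1) := by
  rw [g1BlockRight, g1BlockLeft, sub_lt_sub_iff_left,
    div_lt_div_iff₀ (by positivity) (by positivity), pow_succ _ (k + 1)]
  linarith [pow_pos (two_pos : (0:ℝ) < 2) (k + 1)]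

lemma monotone_g1BlockLeft : Monotone g1BlockLeft :=
  monotone_nat_of_le_succ fun k =>
    (g1BlockLeft_le_g1BlockRight k).trans (g1BlockRight_lt_g1BlockLeft_succ k).le

lemma monotone_g1BlockRight : Monotone g1BlockRight :=
  monotone_nat_of_le_succ fun k =>
    (g1BlockRight_lt_g1BlockLeft_succ k).le.trans (g1BlockLeft_le_g1BlockRight (k + 1))

lemma g1BlockRight_lt_g1BlockLeft {k l : ℕ} (h : k < l) : g1BlockRight k < g1BlockLeft l :=
  (g1BlockRight_lt_g1BlockLeft_succ k).trans_le (monotone_g1BlockLeft h)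

lemma pairwise_disjoint_g1Block : Pairwise (Disjoint on g1Block) :=
  (pairwise_disjoint_on g1Block).2 fun _ _ h =>
    Set.disjoint_left.2 fun _ hk hl => (hk.2.trans_lt (g1BlockRight_lt_g1BlockLeft h)).not_ge hl.1

lemma g1BlockLeft_zero : g1BlockLeft 0 = 0 := by
  norm_num [g1BlockLeft]

lemma g1BlockLeft_nonneg (k : ℕ) : 0 ≤ g1BlockLeft k :=
  g1BlockLeft_zero ▸ monotone_g1BlockLeft (Nat.zero_le k)

lemma g1BlockLeft_lt_one (k : ℕ) : g1BlockLeft k < 1 := by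
  rw [g1BlockLeft, sub_lt_self_iff]; positivity

lemma g1BlockRight_lt_one (k : ℕ) : g1BlockRight k < 1 := by
  rw [g1BlockRight, sub_lt_self_iff]; positivity

lemma measurableSet_g1Support : MeasurableSet g1Support :=
  MeasurableSet.iUnion fun _ => measurableSet_Icc

lemma g1Support_subset_Icc : g1Support ⊆ Icc 0 1 := by
  refine Set.iUnion_subset fun k => Icc_subset_Icc ?_ ?_
  · exact g1BlockLeft_nonneg k
  · exact (g1BlockRight_lt_one k).le

lemma g1_eq_indicator : g1 = g1Support.indicator fun _ => 2 := by
  ext y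
  simp only [g1, g1Support, g1Block, Set.indicator_apply, mem_iUnion, mem_Icc, g1BlockLeft,
    g1BlockRight]

lemma volume_g1Block_inter_Ioi_of_le {k : ℕ} {s : ℝ} (hs : s ≤ g1BlockLeft k) :
    volume (g1Block k ∩ Ioi s) = 2⁻¹ ^ (k + 2) := by
  have hvol : volume (g1Block k) = 2⁻¹ ^ (k + 2) := by
    rw [g1Block, Real.volume_Icc, g1BlockRight_sub_g1BlockLeft, one_div, ← inv_pow,
      ENNReal.ofReal_pow (by norm_num), ENNReal.ofReal_inv_of_pos two_pos, ENNReal.ofReal_ofNat]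
  refine le_antisymm (hvol ▸ measure_mono inter_subset_left) ?_
  calc (2⁻¹ : ℝ≥0∞) ^ (k + 2) = volume (Ioc (g1BlockLeft k) (g1BlockRight k)) := by
        rw [← hvol, g1Block, Real.volume_Icc, Real.volume_Ioc]
    _ ≤ volume (g1Block k ∩ Ioi s) :=
        measure_mono fun x hx => ⟨Ioc_subset_Icc_self hx, hs.trans_lt hx.1⟩

lemma g1Block_inter_Ioi_of_ge {k : ℕ} {s : ℝ} (hs : g1BlockRight k ≤ s) :
    g1Block k ∩ Ioi s = ∅ :=
  Set.eq_empty_of_forall_notMem fun _ hx => (hx.1.2.trans hs).not_gt hx.2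

lemma volume_g1Support_inter_Ioi {K : ℕ} {s : ℝ} (hK : ∀ k < K, g1BlockRight k ≤ s)
    (hs : s ≤ g1BlockLeft K) : volume (g1Support ∩ Ioi s) = 2⁻¹ ^ (K + 1) := by
  rw [g1Support, iUnion_inter, measure_iUnion
    (pairwise_disjoint_g1Block.mono fun _ _ h => h.mono inter_subset_left inter_subset_left)
    fun _ => measurableSet_Icc.inter measurableSet_Ioi,
    ← ENNReal.summable.sum_add_tsum_nat_add' (k := K),
    Finset.sum_eq_zero fun k hk => by rw [g1Block_inter_Ioi_of_ge (hK k (Finset.mem_range.1 hk)),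
      measure_empty], zero_add]
  calc ∑' i, volume (g1Block (i + K) ∩ Ioi s) = ∑' i, 2⁻¹ ^ (K + 2) * 2⁻¹ ^ i := by
        congr! 2 with i
        rw [volume_g1Block_inter_Ioi_of_le (hs.trans (monotone_g1BlockLeft (Nat.le_add_left K i))),
          ← pow_add]
        ring_nf
    _ = 2⁻¹ ^ (K + 1) := by
        rw [ENNReal.tsum_mul_left, ENNReal.tsum_geometric, ENNReal.one_sub_inv_two, inv_inv,
          pow_succ, mul_assoc, ENNReal.inv_mul_cancel two_ne_zero ENNReal.ofNat_ne_top, mul_one]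

lemma g1_nonneg (y : ℝ) : 0 ≤ g1 y := by
  rw [g1]; split_ifs <;> norm_num

lemma measurable_g1 : Measurable g1 :=
  g1_eq_indicator ▸ measurable_const.indicator measurableSet_g1Support

lemma nuG1_eq : nuG1 = (2 : ℝ≥0∞) • volume.restrict g1Support := by
  have h : (fun t => ENNReal.ofReal (g1 t)) = g1Support.indicator fun _ => 2 := by
    ext t
    by_cases ht : t ∈ g1Support <;> simp [g1_eq_indicator, ht]
  rw [nuG1, h, withDensity_indicator measurableSet_g1Support, withDensity_const]

lemma nuG1_apply {t : Set ℝ} (ht : MeasurableSet t) : nuG1 t = 2 * volume (g1Support ∩ t) := by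
  rw [nuG1_eq, Measure.smul_apply, Measure.restrict_apply ht, inter_comm, smul_eq_mul]

instance : IsFiniteMeasure nuG1 :=
  ⟨by
    rw [nuG1_apply MeasurableSet.univ, inter_univ]
    exact ENNReal.mul_lt_top ENNReal.ofNat_lt_top
      ((measure_mono g1Support_subset_Icc).trans_lt measure_Icc_lt_top)⟩

lemma nuG1_Ioi_g1BlockLeft (K : ℕ) : nuG1 (Ioi (g1BlockLeft K)) = 2⁻¹ ^ K := by
  rw [nuG1_apply measurableSet_Ioi, volume_g1Support_inter_Ioi
    (fun k hk => (g1BlockRight_lt_g1BlockLeft hk).le) le_rfl, pow_succ', ← mul_assoc,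
    ENNReal.mul_inv_cancel two_ne_zero ENNReal.ofNat_ne_top, one_mul]

lemma nuG1_Ioi_g1BlockRight (K : ℕ) : nuG1 (Ioi (g1BlockRight K)) = 2⁻¹ ^ (K + 1) := by
  rw [nuG1_apply measurableSet_Ioi, volume_g1Support_inter_Ioi
    (fun k hk => monotone_g1BlockRight (Nat.lt_succ_iff.1 hk))
    (g1BlockRight_lt_g1BlockLeft_succ K).le, pow_succ' _ (K + 1), ← mul_assoc,
    ENNReal.mul_inv_cancel two_ne_zero ENNReal.ofNat_ne_top, one_mul]

lemma G1_eq_nuG1_real {s : ℝ} (hs : 0 ≤ s) : G1 s = nuG1.real (Ioc 0 s) := by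
  rw [G1, intervalIntegral.integral_of_le hs, integral_eq_lintegral_of_nonneg_ae
    (Eventually.of_forall g1_nonneg) measurable_g1.aestronglyMeasurable, measureReal_def, nuG1,
    withDensity_apply _ measurableSet_Ioc]

lemma one_sub_G1 {s : ℝ} (hs : 0 ≤ s) : 1 - G1 s = nuG1.real (Ioi s) := by
  have hIoi : nuG1.real (Ioi 0) = 1 := by
    rw [measureReal_def, ← g1BlockLeft_zero, nuG1_Ioi_g1BlockLeft, pow_zero, ENNReal.toReal_one]
  rw [G1_eq_nuG1_real hs, ← hIoi, ← Ioc_union_Ioi_eq_Ioi hs,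
    measureReal_union (Ioc_disjoint_Ioi le_rfl) measurableSet_Ioi, add_sub_cancel_left]

lemma one_sub_G1_g1BlockLeft (K : ℕ) : 1 - G1 (g1BlockLeft K) = 1 - g1BlockLeft K := by
  rw [one_sub_G1 (g1BlockLeft_nonneg K), measureReal_def, nuG1_Ioi_g1BlockLeft, g1BlockLeft]
  simp

lemma one_sub_G1_g1BlockRight (K : ℕ) :
    1 - G1 (g1BlockRight K) = 2 / 3 * (1 - g1BlockRight K) := by
  rw [one_sub_G1 ((g1BlockLeft_nonneg K).trans (g1BlockLeft_le_g1BlockRight K)), measureReal_def,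
    nuG1_Ioi_g1BlockRight, g1BlockRight]
  simp only [ENNReal.toReal_pow, ENNReal.toReal_inv, ENNReal.toReal_ofNat, inv_pow]
  rw [pow_succ _ (K + 1)]
  field_simp
  ring

lemma tendsto_one_sub_div_two_pow {c : ℝ} (hc : 0 < c) :
    Tendsto (fun k : ℕ => 1 - c / 2 ^ k) atTop (𝓝[<] 1) := by
  refine tendsto_nhdsWithin_iff.2 ⟨?_, Eventually.of_forall fun k => ?_⟩
  · simpa using ((tendsto_pow_atTop_atTop_of_one_lt one_lt_two).const_div_atTop c).const_sub 1
  · simp only [mem_Iio, sub_lt_self_iff]; positivity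

lemma tendsto_g1BlockLeft : Tendsto g1BlockLeft atTop (𝓝[<] 1) :=
  tendsto_one_sub_div_two_pow one_pos

lemma tendsto_g1BlockRight : Tendsto g1BlockRight atTop (𝓝[<] 1) :=
  (tendsto_one_sub_div_two_pow three_pos).comp (tendsto_add_atTop_nat 2)

lemma one_sub_G1_pos {s : ℝ} (h0 : 0 ≤ s) (h1 : s < 1) : 0 < 1 - G1 s := by
  obtain ⟨K, hK⟩ := ((tendsto_nhds_of_tendsto_nhdsWithin tendsto_g1BlockLeft).eventually
    (lt_mem_nhds h1)).exists
  calc 0 < 1 - g1BlockLeft K := sub_pos.2 (g1BlockLeft_lt_one K)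
    _ = nuG1.real (Ioi (g1BlockLeft K)) := by
      rw [← one_sub_G1_g1BlockLeft, one_sub_G1 (g1BlockLeft_nonneg K)]
    _ ≤ nuG1.real (Ioi s) := measureReal_mono (Ioi_subset_Ioi hK.le)
    _ = 1 - G1 s := (one_sub_G1 h0).symm

lemma not_exists_tendsto_condP_one : ¬ ∃ L, Tendsto
    (fun s => 2 * (1 - s) / (2 * (1 - s) + Real.sqrt 2 * (1 - G1 s))) (𝓝[<] 1) (𝓝 L) := by
  refine not_exists_tendsto_of_tendsto_of_eventually_eq tendsto_g1BlockLeft tendsto_g1BlockRight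
    (a := 2 / (2 + Real.sqrt 2)) (b := 2 / (2 + Real.sqrt 2 * (2 / 3)))
    (Eventually.of_forall fun k => ?_) (Eventually.of_forall fun k => ?_) ?_
  · rw [one_sub_G1_g1BlockLeft]
    have := sub_pos.2 (g1BlockLeft_lt_one k)
    field_simp
  · rw [one_sub_G1_g1BlockRight]
    have := sub_pos.2 (g1BlockRight_lt_one k)
    field_simp
  · have := Real.sqrt_pos.2 two_pos
    rw [Ne, div_eq_div_iff (by positivity) (by positivity)]
    intro h
    nlinarith

instance : IsFiniteMeasure unif := by
  rw [unif]; infer_instance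

instance isFiniteMeasure_ofReal_smul {α : Type*} [MeasurableSpace α] (c : ℝ) (ν : Measure α)
    [IsFiniteMeasure ν] : IsFiniteMeasure (ENNReal.ofReal c • ν) :=
  ν.smul_finite ENNReal.ofReal_ne_top

lemma unif_real_Ioi {s : ℝ} (hs : s ∈ Icc (0 : ℝ) 1) : unif.real (Ioi s) = 1 - s := by
  rw [unif, measureReal_restrict_apply measurableSet_Ioi, inter_comm, Ioc_inter_Ioi,
    sup_eq_right.2 hs.1, Real.volume_real_Ioc_of_le hs.2]

lemma law2_real_apply {B : Set (ℝ × ℝ)} (hB : MeasurableSet B) :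
    law2.real B = (unif.real ((fun u => (u, (0:ℝ))) ⁻¹' B) + unif.real ((fun u => ((0:ℝ), u)) ⁻¹' B)
      + Real.sqrt 2 * nuG1.real ((fun v => (v, v)) ⁻¹' B)) / (2 + Real.sqrt 2) := by
  rw [law2, measureReal_add_apply, measureReal_add_apply, measureReal_ennreal_smul_apply,
    measureReal_ennreal_smul_apply, measureReal_ennreal_smul_apply,
    map_measureReal_apply (by fun_prop) hB, map_measureReal_apply (by fun_prop) hB,
    map_measureReal_apply (by fun_prop) hB,
    ENNReal.toReal_ofReal (by positivity), ENNReal.toReal_ofReal (by positivity)]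
  ring

def exceedances (s : ℝ) (p : ℝ × ℝ) : ℕ :=
  (if s < p.1 then 1 else 0) + (if s < p.2 then 1 else 0)

lemma measurable_exceedances (s : ℝ) : Measurable (exceedances s) :=
  (Measurable.ite (measurableSet_lt measurable_const measurable_fst) measurable_const
    measurable_const).add
  (Measurable.ite (measurableSet_lt measurable_const measurable_snd) measurable_const
    measurable_const)

lemma measurableSet_setOf_exceedances (s : ℝ) (P : ℕ → Prop) :
    MeasurableSet {p | P (exceedances s p)} :=
  measurable_exceedances s (.of_discrete : MeasurableSet {n | P n})

lemma setOf_ite_lt_eq {P : ℕ → Prop} (hP : ¬ P 0) (s : ℝ) (n : ℕ) :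
    {u : ℝ | P (if s < u then n else 0)} = if P n then Ioi s else ∅ := by
  ext u
  by_cases hu : s < u <;> by_cases hn : P n <;> simp [hu, hn, hP]

lemma law2_real_setOf_exceedances {s : ℝ} (hs : s ∈ Icc (0 : ℝ) 1) {P : ℕ → Prop} (hP : ¬ P 0) :
    law2.real {p | P (exceedances s p)} =
      ((if P 1 then 2 * (1 - s) else 0) + (if P 2 then Real.sqrt 2 * (1 - G1 s) else 0)) /
        (2 + Real.sqrt 2) := by
  have hs0 : ¬ s < 0 := not_lt.2 hs.1
  have hfst : (fun u => (u, (0:ℝ))) ⁻¹' {p | P (exceedances s p)} =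
      {u | P (if s < u then 1 else 0)} := by
    ext u; simp [exceedances, hs0]
  have hsnd : (fun u => ((0:ℝ), u)) ⁻¹' {p | P (exceedances s p)} =
      {u | P (if s < u then 1 else 0)} := by
    ext u; simp [exceedances, hs0]
  have hdiag : (fun v => (v, v)) ⁻¹' {p | P (exceedances s p)} =
      {v | P (if s < v then 2 else 0)} := by
    ext v; by_cases hv : s < v <;> simp [exceedances, hv]
  rw [law2_real_apply (measurableSet_setOf_exceedances s P), hfst, hsnd, hdiag,
    setOf_ite_lt_eq hP, setOf_ite_lt_eq hP, one_sub_G1 hs.1]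
  split_ifs <;> simp [unif_real_Ioi hs] <;> ring

lemma measure_setOf_count_eq_map {Ω : Type*} [MeasurableSpace Ω] {μ : Measure Ω}
    {X : Ω → ℝ × ℝ} (hX : Measurable X) {N : ℝ → Ω → ℕ}
    (hN : ∀ s ω, N s ω = exceedances s (X ω)) (s : ℝ) (P : ℕ → Prop) :
    μ {ω | P (N s ω)} = μ.map X {p | P (exceedances s p)} := by
  rw [Measure.map_apply hX (measurableSet_setOf_exceedances s P)]
  simp only [hN]
  rfl

section

variable {Ω : Type*} [MeasurableSpace Ω] {μ : Measure Ω} {X : Ω → ℝ × ℝ} {N : ℝ → Ω → ℕ}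

lemma measureReal_setOf_count_of_map_eq_law2 (hX : Measurable X) (hlaw : μ.map X = law2)
    (hN : ∀ s ω, N s ω = exceedances s (X ω)) {s : ℝ} (hs : s ∈ Ioo (0 : ℝ) 1)
    {P : ℕ → Prop} (hP : ¬ P 0) :
    μ.real {ω | P (N s ω)} =
      ((if P 1 then 2 * (1 - s) else 0) + (if P 2 then Real.sqrt 2 * (1 - G1 s) else 0)) /
        (2 + Real.sqrt 2) := by
  rw [measureReal_def, measure_setOf_count_eq_map hX hN s P, hlaw]
  exact law2_real_setOf_exceedances (Ioo_subset_Icc_self hs) hP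

lemma measureReal_count_eq_one (hX : Measurable X) (hlaw : μ.map X = law2)
    (hN : ∀ s ω, N s ω = exceedances s (X ω)) {s : ℝ} (hs : s ∈ Ioo (0 : ℝ) 1) :
    μ.real {ω | N s ω = 1} = 2 * (1 - s) / (2 + Real.sqrt 2) := by
  simpa using measureReal_setOf_count_of_map_eq_law2 hX hlaw hN hs (P := (· = 1)) (by omega)

lemma measureReal_count_eq_two (hX : Measurable X) (hlaw : μ.map X = law2)
    (hN : ∀ s ω, N s ω = exceedances s (X ω)) {s : ℝ} (hs : s ∈ Ioo (0 : ℝ) 1) :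
    μ.real {ω | N s ω = 2} = Real.sqrt 2 * (1 - G1 s) / (2 + Real.sqrt 2) := by
  simpa using measureReal_setOf_count_of_map_eq_law2 hX hlaw hN hs (P := (· = 2)) (by omega)

lemma measureReal_two_le_count (hX : Measurable X) (hlaw : μ.map X = law2)
    (hN : ∀ s ω, N s ω = exceedances s (X ω)) {s : ℝ} (hs : s ∈ Ioo (0 : ℝ) 1) :
    μ.real {ω | 2 ≤ N s ω} = Real.sqrt 2 * (1 - G1 s) / (2 + Real.sqrt 2) := by
  simpa using measureReal_setOf_count_of_map_eq_law2 hX hlaw hN hs (P := (2 ≤ ·)) (by omega)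

lemma measureReal_one_le_count (hX : Measurable X) (hlaw : μ.map X = law2)
    (hN : ∀ s ω, N s ω = exceedances s (X ω)) {s : ℝ} (hs : s ∈ Ioo (0 : ℝ) 1) :
    μ.real {ω | 1 ≤ N s ω} = (2 * (1 - s) + Real.sqrt 2 * (1 - G1 s)) / (2 + Real.sqrt 2) := by
  simpa using measureReal_setOf_count_of_map_eq_law2 hX hlaw hN hs (P := (1 ≤ ·)) (by omega)

lemma condP_count_eq_two_given_two_le (hX : Measurable X) (hlaw : μ.map X = law2)
    (hN : ∀ s ω, N s ω = exceedances s (X ω)) {s : ℝ} (hs : s ∈ Ioo (0 : ℝ) 1) :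
    condP μ {ω | N s ω = 2} {ω | 2 ≤ N s ω} = 1 := by
  have := one_sub_G1_pos hs.1.le hs.2
  rw [condP, inter_eq_left.2 fun ω h => h.ge, ← measureReal_def, ← measureReal_def,
    measureReal_count_eq_two hX hlaw hN hs, measureReal_two_le_count hX hlaw hN hs,
    div_self (by positivity)]

lemma condP_count_eq_one_given_one_le (hX : Measurable X) (hlaw : μ.map X = law2)
    (hN : ∀ s ω, N s ω = exceedances s (X ω)) {s : ℝ} (hs : s ∈ Ioo (0 : ℝ) 1) :
    condP μ {ω | N s ω = 1} {ω | 1 ≤ N s ω} =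
      2 * (1 - s) / (2 * (1 - s) + Real.sqrt 2 * (1 - G1 s)) := by
  rw [condP, inter_eq_left.2 fun ω h => h.ge, ← measureReal_def, ← measureReal_def,
    measureReal_count_eq_one hX hlaw hN hs, measureReal_one_le_count hX hlaw hN hs,
    div_div_div_cancel_right₀ (by positivity)]

lemma measureReal_count_eq_one_div_measureReal_two_le (hX : Measurable X) (hlaw : μ.map X = law2)
    (hN : ∀ s ω, N s ω = exceedances s (X ω)) {s : ℝ} (hs : s ∈ Ioo (0 : ℝ) 1) :
    μ.real {ω | N s ω = 1} / μ.real {ω | 2 ≤ N s ω} = Real.sqrt 2 * (1 - s) / (1 - G1 s) := by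
  have hG1 := one_sub_G1_pos hs.1.le hs.2
  rw [measureReal_count_eq_one hX hlaw hN hs, measureReal_two_le_count hX hlaw hN hs,
    div_div_div_cancel_right₀ (by positivity), div_eq_div_iff (by positivity) hG1.ne']
  linear_combination (-(1 - s) * (1 - G1 s)) * Real.mul_self_sqrt (zero_le_two : (0:ℝ) ≤ 2)

end

end

theorem stmt3_general {Ω : Type*} [MeasurableSpace Ω] (μ : Measure Ω)
    (X1 X2 : Ω → ℝ) (h1 : Measurable X1) (h2 : Measurable X2)
    (hlaw : Measure.map (fun ω => (X1 ω, X2 ω)) μ = law2)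
    (N : ℝ → Ω → ℕ)
    (hN : ∀ s ω, N s ω = (if s < X1 ω then 1 else 0) + (if s < X2 ω then 1 else 0)) :
    (∀ s ∈ Set.Ioo (0:ℝ) 1,
      (μ {ω | N s ω = 1}).toReal / (μ {ω | 2 ≤ N s ω}).toReal =
        Real.sqrt 2 * (1 - s) / (1 - G1 s) ∧
      condP μ {ω | N s ω = 2} {ω | 2 ≤ N s ω} = 1) ∧
    Tendsto (fun s => condP μ {ω | N s ω = 2} {ω | 2 ≤ N s ω}) (𝓝[<] (1:ℝ)) (𝓝 1) ∧
    ¬ ∃ L : ℝ, Tendsto (fun s => condP μ {ω | N s ω = 1} {ω | 1 ≤ N s ω})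
        (𝓝[<] (1:ℝ)) (𝓝 L) := by
  have hX := h1.prodMk h2
  have hIoo : Ioo (0:ℝ) 1 ∈ 𝓝[<] 1 := Ioo_mem_nhdsLT one_pos
  refine ⟨fun s hs => ⟨measureReal_count_eq_one_div_measureReal_two_le hX hlaw hN hs,
    condP_count_eq_two_given_two_le hX hlaw hN hs⟩, ?_, ?_⟩
  · exact tendsto_const_nhds.congr' (eventually_of_mem hIoo fun s hs =>
      (condP_count_eq_two_given_two_le hX hlaw hN hs).symm)
  · rintro ⟨L, hL⟩
    exact not_exists_tendsto_condP_one ⟨L, hL.congr' (eventually_of_mem hIoo fun s hs =>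
      condP_count_eq_one_given_one_le hX hlaw hN hs)⟩

/-- Under the mixture law `law2`:
`P(N_{s,2}=1)/P(N_{s,2}≥2) = √2(1-s)/(1-G₁(s))` for `s ∈ (0,1)`,
`P(N_{s,2}=2 | N_{s,2}≥2) = 1` (so `FD_{2,2}` exists, degenerate at 2), but
`lim_{s↑1} P(N_{s,2}=1 | N_{s,2}≥1)` does not exist (so `FD_{2,1}` does not exist). -/
theorem stmt3 {Ω : Type*} [MeasurableSpace Ω] (μ : Measure Ω) [IsProbabilityMeasure μ]
    (X1 X2 : Ω → ℝ) (h1 : Measurable X1) (h2 : Measurable X2)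
    (hlaw : Measure.map (fun ω => (X1 ω, X2 ω)) μ = law2)
    (N : ℝ → Ω → ℕ)
    (hN : ∀ s ω, N s ω = (if s < X1 ω then 1 else 0) + (if s < X2 ω then 1 else 0)) :
    (∀ s ∈ Set.Ioo (0:ℝ) 1,
      (μ {ω | N s ω = 1}).toReal / (μ {ω | 2 ≤ N s ω}).toReal =
        Real.sqrt 2 * (1 - s) / (1 - G1 s) ∧
      condP μ {ω | N s ω = 2} {ω | 2 ≤ N s ω} = 1) ∧
    Tendsto (fun s => condP μ {ω | N s ω = 2} {ω | 2 ≤ N s ω}) (𝓝[<] (1:ℝ)) (𝓝 1) ∧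
    ¬ ∃ L : ℝ, Tendsto (fun s => condP μ {ω | N s ω = 1} {ω | 1 ≤ N s ω})
        (𝓝[<] (1:ℝ)) (𝓝 L) :=
  stmt3_general μ X1 X2 h1 h2 hlaw N hN
end

section
/- Let r > 0 and 0 < p < 1. Then the Stein factors G_{m,1} and G_{m,2} for conditional negative binomial approximation are both decreasing in m: G_{m,1} ≤ G_{m−1,1} and G_{m,2} ≤ G_{m−1,2} for every m ≥ 1. -/
open MeasureTheory Filter Set Topology Classical

/-- The negative binomial probability mass function:
`P(Z = k) = Γ(r+k)/(Γ(r) k!) (1-p)^r p^k`. -/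
noncomputable def nbPMF (r p : ℝ) (k : ℕ) : ℝ :=
  Real.Gamma (r + k) / (Real.Gamma r * (k.factorial : ℝ)) * (1 - p) ^ r * p ^ k

/-- `P(Z ∈ A | Z ≥ m)` for `Z ~ NB(r,p)`. -/
noncomputable def nbCondProb (r p : ℝ) (m : ℕ) (A : Set ℕ) : ℝ :=
  (∑' k : ℕ, if k ∈ A ∧ m ≤ k then nbPMF r p k else 0) /
    (∑' k : ℕ, if m ≤ k then nbPMF r p k else 0)

/-- `g` is a solution on `ℤ_m` of the Stein equation for `NB^{(m)}(r,p)` with test function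
`f = 1_A`: `p(r+i) g(i+1) − i g(i) 1{i>m} = 1_A(i) − P(Z^{(m)} ∈ A)` for all `i ≥ m`. -/
def IsNBSteinSol (r p : ℝ) (m : ℕ) (A : Set ℕ) (g : ℕ → ℝ) : Prop :=
  ∀ i : ℕ, m ≤ i →
    p * (r + i) * g (i + 1) - (if m < i then (i : ℝ) * g i else 0) =
      (if i ∈ A then 1 else 0) - nbCondProb r p m A

/-- The first Stein factor `G_{m,1} = sup_{f ∈ F_m} ‖g_{m,f}‖_m`, where
`‖h‖_m = sup_{w ≥ m} |h(w+1)|`. -/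
noncomputable def nbG1 (r p : ℝ) (m : ℕ) : ℝ :=
  sSup {x : ℝ | ∃ A : Set ℕ, A ⊆ Set.Ici m ∧ ∃ g : ℕ → ℝ, IsNBSteinSol r p m A g ∧
    ∃ w : ℕ, m ≤ w ∧ x = |g (w + 1)|}

/-- The second Stein factor `G_{m,2} = sup_{f ∈ F_m} ‖Δg_{m,f}‖_m`. -/
noncomputable def nbG2 (r p : ℝ) (m : ℕ) : ℝ :=
  sSup {x : ℝ | ∃ A : Set ℕ, A ⊆ Set.Ici m ∧ ∃ g : ℕ → ℝ, IsNBSteinSol r p m A g ∧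
    ∃ w : ℕ, m ≤ w ∧ x = |g (w + 2) - g (w + 1)|}

/-!
Above `m` every solution of the Stein equation for `NB^{(m)}(r,p)` and a test function `f`
is `g(k) = (P(Z ≥ k) E f(Z^{(m)}) - E[f(Z); Z ≥ k]) / (k P(Z = k))`. For `A ⊆ ℤ_{m+1}` the
level-`(m+1)` solution for `1_A` is therefore the level-`m` solution for the `[0,1]`-valued
test function equal to `1_A` off `m` and to `P(Z^{(m+1)} ∈ A)` at `m`. Both `g(w+1)` and
`Δg(w+1)` are integrals of `f` against a bounded kernel, so over `[0,1]`-valued `f` their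
absolute values are maximised by indicators of subsets of `ℤ_m`: every quantity entering
`G_{m+1,i}` is dominated by one entering `G_{m,i}`. The latter set is bounded, as `sSup` on `ℝ`
requires, because `P(Z ≥ k) = O(P(Z = k))`.
-/

lemma abs_le_one_of_mem_Icc {f : ℕ → ℝ} (hf : ∀ k, f k ∈ Icc 0 1) (k : ℕ) : |f k| ≤ 1 :=
  abs_le.mpr ⟨by linarith [(hf k).1], (hf k).2⟩

lemma indicator_one_mem_Icc (A : Set ℕ) (j : ℕ) : A.indicator (1 : ℕ → ℝ) j ∈ Icc 0 1 := by
  by_cases hj : j ∈ A <;> simp [hj]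

lemma abs_mul_le_of_abs_le_one {x y K : ℝ} (hx : |x| ≤ K) (hy : |y| ≤ 1) : |x * y| ≤ K := by
  rw [abs_mul]
  exact (mul_le_of_le_one_right (abs_nonneg x) hy).trans hx

lemma summable_mul_of_abs_le {F w : ℕ → ℝ} {K : ℝ} (hF : ∀ j, |F j| ≤ K) (hw0 : ∀ j, 0 ≤ w j)
    (hw : Summable w) : Summable fun j => F j * w j :=
  (hw.mul_left K).of_norm_bounded fun j => by
    rw [Real.norm_eq_abs, abs_mul, abs_of_nonneg (hw0 j)]
    exact mul_le_mul_of_nonneg_right (hF j) (hw0 j)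

lemma tsum_mul_le_tsum_mul_indicator {c f w : ℕ → ℝ} {K : ℝ} (hc : ∀ j, |c j| ≤ K)
    (hf : ∀ j, f j ∈ Icc 0 1) (hw0 : ∀ j, 0 ≤ w j) (hw : Summable w) :
    ∑' j, c j * f j * w j ≤ ∑' j, c j * {j | 0 < c j}.indicator 1 j * w j := by
  refine Summable.tsum_le_tsum (fun j => mul_le_mul_of_nonneg_right ?_ (hw0 j))
    (summable_mul_of_abs_le (fun j => abs_mul_le_of_abs_le_one (hc j) (abs_le_one_of_mem_Icc hf j))
      hw0 hw)
    (summable_mul_of_abs_le (fun j => abs_mul_le_of_abs_le_one (hc j)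
      (abs_le_one_of_mem_Icc (indicator_one_mem_Icc _) j)) hw0 hw)
  by_cases hj : 0 < c j
  · simpa [hj] using mul_le_of_le_one_right hj.le (hf j).2
  · simpa [hj] using mul_nonpos_of_nonpos_of_nonneg (not_lt.mp hj) (hf j).1

lemma exists_abs_tsum_mul_le_indicator {c f w : ℕ → ℝ} {K : ℝ} (hc : ∀ j, |c j| ≤ K)
    (hf : ∀ j, f j ∈ Icc 0 1) (hw0 : ∀ j, 0 ≤ w j) (hw : Summable w) :
    ∃ B ⊆ Function.support c,
      |∑' j, c j * f j * w j| ≤ |∑' j, c j * B.indicator 1 j * w j| := by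
  rcases le_total 0 (∑' j, c j * f j * w j) with hs | hs
  · refine ⟨{j | 0 < c j}, fun j hj => ne_of_gt hj, ?_⟩
    rw [abs_of_nonneg hs]
    exact (tsum_mul_le_tsum_mul_indicator hc hf hw0 hw).trans (le_abs_self _)
  · refine ⟨{j | 0 < -c j}, fun j hj => neg_ne_zero.mp (ne_of_gt hj), ?_⟩
    have := tsum_mul_le_tsum_mul_indicator (c := fun j => -c j) (by simpa using hc) hf hw0 hw
    simp only [neg_mul, tsum_neg] at this
    rw [abs_of_nonpos hs]
    exact this.trans (neg_le_abs _)

section NegBinomialStein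

variable {r p : ℝ}

lemma nbPMF_pos (hr : 0 < r) (hp0 : 0 < p) (hp1 : p < 1) (k : ℕ) : 0 < nbPMF r p k := by
  have := Real.Gamma_pos_of_pos (show 0 < r + k by positivity)
  have := Real.Gamma_pos_of_pos hr
  have : 0 < (1 - p) ^ r := Real.rpow_pos_of_pos (by linarith) r
  unfold nbPMF
  positivity

lemma nbPMF_succ (hr : 0 < r) (k : ℕ) :
    (k + 1 : ℝ) * nbPMF r p (k + 1) = p * (r + k) * nbPMF r p k := by
  have hΓ : Real.Gamma (r + ↑(k + 1)) = (r + k) * Real.Gamma (r + k) := by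
    rw [Nat.cast_succ, ← add_assoc, Real.Gamma_add_one (by positivity)]
  have := (Real.Gamma_pos_of_pos hr).ne'
  unfold nbPMF
  rw [hΓ, Nat.factorial_succ, Nat.cast_mul, Nat.cast_succ]
  field_simp
  ring

lemma eventually_nbPMF_succ_le (hr : 0 < r) (hp0 : 0 < p) (hp1 : p < 1) :
    ∀ᶠ k : ℕ in atTop, nbPMF r p (k + 1) ≤ (1 + p) / 2 * nbPMF r p k := by
  filter_upwards [tendsto_natCast_atTop_atTop.eventually_ge_atTop (2 * p * r / (1 - p))]
    with k hk
  rw [div_le_iff₀ (by linarith)] at hk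
  have hπ := nbPMF_pos hr hp0 hp1 k
  have hrec := nbPMF_succ (p := p) hr k
  have : p * (r + k) ≤ (1 + p) / 2 * (k + 1) := by nlinarith
  nlinarith

lemma nbPMF_summable (hr : 0 < r) (hp0 : 0 < p) (hp1 : p < 1) : Summable (nbPMF r p) := by
  refine summable_of_ratio_norm_eventually_le (r := (1 + p) / 2) (by linarith) ?_
  filter_upwards [eventually_nbPMF_succ_le hr hp0 hp1] with k hk
  simpa only [Real.norm_of_nonneg (nbPMF_pos hr hp0 hp1 _).le] using hk

noncomputable def nbTail (r p : ℝ) (f : ℕ → ℝ) (n : ℕ) : ℝ :=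
  ∑' k, (if n ≤ k then f k else 0) * nbPMF r p k

lemma nbTail_summable (hr : 0 < r) (hp0 : 0 < p) (hp1 : p < 1) {f : ℕ → ℝ} {K : ℝ}
    (hf : ∀ k, |f k| ≤ K) (n : ℕ) :
    Summable fun k => (if n ≤ k then f k else 0) * nbPMF r p k := by
  refine summable_mul_of_abs_le (K := K) (fun k => ?_) (fun k => (nbPMF_pos hr hp0 hp1 k).le)
    (nbPMF_summable hr hp0 hp1)
  split_ifs
  · exact hf k
  · simpa using (abs_nonneg _).trans (hf k)

lemma nbTail_eq_add (hr : 0 < r) (hp0 : 0 < p) (hp1 : p < 1) {f : ℕ → ℝ} {K : ℝ}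
    (hf : ∀ k, |f k| ≤ K) (n : ℕ) :
    nbTail r p f n = f n * nbPMF r p n + nbTail r p f (n + 1) := by
  have hsplit : ∀ k, (if n ≤ k then f k else 0) * nbPMF r p k =
      (if k = n then f n * nbPMF r p n else 0) + (if n + 1 ≤ k then f k else 0) * nbPMF r p k := by
    intro k
    rcases lt_trichotomy k n with h | rfl | h
    · simp [h.ne, not_le.mpr h, not_le.mpr (Nat.lt_succ_of_lt h)]
    · simp
    · simp [h.ne', h.le, Nat.succ_le_of_lt h]
  rw [nbTail, tsum_congr hsplit, Summable.tsum_add (hasSum_ite_eq n _).summable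
    (nbTail_summable hr hp0 hp1 hf _), tsum_ite_eq, nbTail]

lemma nbTail_nonneg (hr : 0 < r) (hp0 : 0 < p) (hp1 : p < 1) {f : ℕ → ℝ} (hf : ∀ k, 0 ≤ f k)
    (n : ℕ) : 0 ≤ nbTail r p f n :=
  tsum_nonneg fun k => mul_nonneg (by split_ifs <;> simp [hf k]) (nbPMF_pos hr hp0 hp1 k).le

lemma nbTail_le_nbTail_one (hr : 0 < r) (hp0 : 0 < p) (hp1 : p < 1) {f : ℕ → ℝ}
    (hf : ∀ k, f k ∈ Icc 0 1) (n : ℕ) : nbTail r p f n ≤ nbTail r p 1 n := by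
  refine Summable.tsum_le_tsum (fun k => ?_) (nbTail_summable hr hp0 hp1
    (abs_le_one_of_mem_Icc hf) n) (nbTail_summable hr hp0 hp1 (K := 1) (by simp) n)
  gcongr
  · exact (nbPMF_pos hr hp0 hp1 k).le
  · split_ifs
    · exact (hf k).2
    · rfl

lemma nbTail_one_pos (hr : 0 < r) (hp0 : 0 < p) (hp1 : p < 1) (n : ℕ) : 0 < nbTail r p 1 n := by
  rw [nbTail_eq_add hr hp0 hp1 (K := 1) (by simp), Pi.one_apply, one_mul]
  exact add_pos_of_pos_of_nonneg (nbPMF_pos hr hp0 hp1 n)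
    (nbTail_nonneg hr hp0 hp1 (fun _ => zero_le_one) _)

/-- With `q = (1 + p) / 2`, the ratio bound gives `P(Z > k) ≤ q P(Z ≥ k)` for large `k`, hence
`P(Z ≥ k) ≤ P(Z = k) / (1 - q)`. -/
lemma exists_nbTail_one_le (hr : 0 < r) (hp0 : 0 < p) (hp1 : p < 1) :
    ∃ C, ∀ k, nbTail r p 1 k ≤ C * nbPMF r p k := by
  obtain ⟨N, hN⟩ := eventually_atTop.mp (eventually_nbPMF_succ_le hr hp0 hp1)
  have hsum := nbTail_summable hr hp0 hp1 (K := 1) (f := 1) (by simp)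
  have hshift : ∀ k, N ≤ k → nbTail r p 1 (k + 1) ≤ (1 + p) / 2 * nbTail r p 1 k := by
    intro k hk
    rw [nbTail, (hsum (k + 1)).tsum_eq_zero_add, nbTail, ← tsum_mul_left, if_neg (by omega),
      zero_mul, zero_add]
    refine Summable.tsum_le_tsum (fun j => ?_) ((summable_nat_add_iff 1).mpr (hsum (k + 1)))
      ((hsum k).mul_left _)
    simp only [Pi.one_apply, add_le_add_iff_right]
    split_ifs with h
    · simpa using hN j (hk.trans h)
    · simp
  have hbdd : BddAbove (range fun k => nbTail r p 1 k / nbPMF r p k) := by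
    refine Filter.IsBoundedUnder.bddAbove_range ⟨(1 - (1 + p) / 2)⁻¹, ?_⟩
    simp only [eventually_map, eventually_atTop]
    refine ⟨N, fun k hk => ?_⟩
    have hπ := nbPMF_pos hr hp0 hp1 k
    have hstep := nbTail_eq_add hr hp0 hp1 (K := 1) (f := 1) (by simp) k
    rw [Pi.one_apply, one_mul] at hstep
    rw [div_le_iff₀ hπ, inv_mul_eq_div, le_div_iff₀ (by linarith)]
    linarith [hshift k hk]
  obtain ⟨C, hC⟩ := hbdd
  exact ⟨C, fun k => (div_le_iff₀ (nbPMF_pos hr hp0 hp1 k)).mp (hC ⟨k, rfl⟩)⟩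

noncomputable def nbCondExp (r p : ℝ) (f : ℕ → ℝ) (n : ℕ) : ℝ :=
  nbTail r p f n / nbTail r p 1 n

lemma nbCondProb_eq_nbCondExp (m : ℕ) (A : Set ℕ) :
    nbCondProb r p m A = nbCondExp r p (A.indicator 1) m := by
  unfold nbCondProb nbCondExp nbTail
  congr 1 <;> refine tsum_congr fun k => ?_ <;> by_cases hk : k ∈ A <;> by_cases hmk : m ≤ k <;>
    simp [hk, hmk]

lemma nbCondExp_mem_Icc (hr : 0 < r) (hp0 : 0 < p) (hp1 : p < 1) {f : ℕ → ℝ}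
    (hf : ∀ k, f k ∈ Icc 0 1) (n : ℕ) : nbCondExp r p f n ∈ Icc 0 1 := by
  have hT := nbTail_one_pos hr hp0 hp1 n
  exact ⟨div_nonneg (nbTail_nonneg hr hp0 hp1 (fun k => (hf k).1) n) hT.le,
    (div_le_one hT).mpr (nbTail_le_nbTail_one hr hp0 hp1 hf n)⟩

noncomputable def nbSteinSol (r p : ℝ) (f : ℕ → ℝ) (n k : ℕ) : ℝ :=
  (nbTail r p 1 k * nbCondExp r p f n - nbTail r p f k) / (k * nbPMF r p k)

lemma nbSteinSol_stein_eq (hr : 0 < r) (hp0 : 0 < p) (hp1 : p < 1) {f : ℕ → ℝ} {K : ℝ}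
    (hf : ∀ k, |f k| ≤ K) {m i : ℕ} (hi : m ≤ i) :
    p * (r + i) * nbSteinSol r p f m (i + 1) -
        (if m < i then (i : ℝ) * nbSteinSol r p f m i else 0) = f i - nbCondExp r p f m := by
  set E := nbCondExp r p f m
  set num : ℕ → ℝ := fun k => nbTail r p 1 k * E - nbTail r p f k
  have hπ := nbPMF_pos hr hp0 hp1 i
  have hnum_succ : num (i + 1) = num i + (f i - E) * nbPMF r p i := by
    simp only [num, nbTail_eq_add hr hp0 hp1 hf i,
      nbTail_eq_add hr hp0 hp1 (K := 1) (f := 1) (by simp) i, Pi.one_apply]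
    ring
  have hnext : p * (r + i) * nbSteinSol r p f m (i + 1) = num (i + 1) / nbPMF r p i := by
    rw [nbSteinSol, Nat.cast_succ, nbPMF_succ hr]
    field_simp
    rfl
  have hprev : (if m < i then (i : ℝ) * nbSteinSol r p f m i else 0) = num i / nbPMF r p i := by
    split_ifs with hmi
    · have : (i : ℝ) ≠ 0 := by exact_mod_cast (Nat.zero_le m).trans_lt hmi |>.ne'
      rw [nbSteinSol]
      field_simp
      rfl
    · have hnum_m : num m = 0 := by
        simp only [num, E, nbCondExp]
        field_simp [(nbTail_one_pos hr hp0 hp1 m).ne']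
        ring
      rw [show i = m by omega, hnum_m, zero_div]
  rw [hnext, hprev, hnum_succ]
  field_simp
  ring

lemma isNBSteinSol_nbSteinSol (hr : 0 < r) (hp0 : 0 < p) (hp1 : p < 1) (m : ℕ) (A : Set ℕ) :
    IsNBSteinSol r p m A (nbSteinSol r p (A.indicator 1) m) := fun i hi => by
  rw [nbSteinSol_stein_eq hr hp0 hp1 (abs_le_one_of_mem_Icc (indicator_one_mem_Icc A)) hi,
    nbCondProb_eq_nbCondExp, indicator_apply, Pi.one_apply]

lemma IsNBSteinSol.eq_of_lt (hr : 0 < r) (hp0 : 0 < p) {m : ℕ} {A : Set ℕ} {g h : ℕ → ℝ}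
    (hg : IsNBSteinSol r p m A g) (hh : IsNBSteinSol r p m A h) {k : ℕ} (hk : m < k) :
    g k = h k := by
  induction k, hk using Nat.le_induction with
  | base =>
    have := (hg m le_rfl).trans (hh m le_rfl).symm
    simp only [lt_irrefl, if_false, sub_zero] at this
    exact mul_left_cancel₀ (by positivity) this
  | succ k hk ih =>
    have := (hg k (by omega)).trans (hh k (by omega)).symm
    have hmk : m < k := hk
    rw [if_pos hmk, if_pos hmk, ih, sub_left_inj] at this
    exact mul_left_cancel₀ (by positivity) this

lemma IsNBSteinSol.eq_nbSteinSol (hr : 0 < r) (hp0 : 0 < p) (hp1 : p < 1) {m : ℕ} {A : Set ℕ}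
    {g : ℕ → ℝ} (hg : IsNBSteinSol r p m A g) {k : ℕ} (hk : m < k) :
    g k = nbSteinSol r p (A.indicator 1) m k :=
  hg.eq_of_lt hr hp0 (isNBSteinSol_nbSteinSol hr hp0 hp1 m A) hk

lemma nbTail_update_of_lt {f : ℕ → ℝ} {n k : ℕ} (hk : n < k) (c : ℝ) :
    nbTail r p (Function.update f n c) k = nbTail r p f k :=
  tsum_congr fun j => by
    split_ifs with hj
    · rw [Function.update_of_ne (by omega)]
    · rfl

lemma nbCondExp_update (hr : 0 < r) (hp0 : 0 < p) (hp1 : p < 1) {f : ℕ → ℝ} {K : ℝ}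
    (hf : ∀ k, |f k| ≤ K) (n : ℕ) :
    nbCondExp r p (Function.update f n (nbCondExp r p f (n + 1))) n = nbCondExp r p f (n + 1) := by
  set θ := nbCondExp r p f (n + 1)
  have hbdd : ∀ k, |Function.update f n θ k| ≤ max K |θ| := fun k => by
    rcases eq_or_ne k n with rfl | hk
    · simp
    · simpa [Function.update_of_ne hk] using Or.inl (hf k)
  have hT := nbTail_one_pos hr hp0 hp1 (n + 1)
  have hθ : nbTail r p f (n + 1) = θ * nbTail r p 1 (n + 1) := by
    simp only [θ, nbCondExp]
    field_simp
  rw [nbCondExp, nbTail_eq_add hr hp0 hp1 hbdd n, nbTail_update_of_lt (Nat.lt_succ_self n),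
    Function.update_self, hθ, nbTail_eq_add hr hp0 hp1 (K := 1) (f := 1) (by simp) n,
    Pi.one_apply, one_mul]
  field_simp [(add_pos (nbPMF_pos hr hp0 hp1 n) hT).ne']

lemma nbSteinSol_update (hr : 0 < r) (hp0 : 0 < p) (hp1 : p < 1) {f : ℕ → ℝ} {K : ℝ}
    (hf : ∀ k, |f k| ≤ K) {n k : ℕ} (hk : n < k) :
    nbSteinSol r p (Function.update f n (nbCondExp r p f (n + 1))) n k =
      nbSteinSol r p f (n + 1) k := by
  rw [nbSteinSol, nbSteinSol, nbCondExp_update hr hp0 hp1 hf, nbTail_update_of_lt hk]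

lemma abs_nbSteinSol_le (hr : 0 < r) (hp0 : 0 < p) (hp1 : p < 1) {f : ℕ → ℝ}
    (hf : ∀ k, f k ∈ Icc 0 1) {C : ℝ} (hC : ∀ k, nbTail r p 1 k ≤ C * nbPMF r p k) (m : ℕ)
    {k : ℕ} (hk : 0 < k) : |nbSteinSol r p f m k| ≤ C := by
  have hπ := nbPMF_pos hr hp0 hp1 k
  have hT := nbTail_one_pos hr hp0 hp1 k
  have hE := nbCondExp_mem_Icc hr hp0 hp1 hf m
  have hU0 := nbTail_nonneg hr hp0 hp1 (fun j => (hf j).1) k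
  have hU1 := nbTail_le_nbTail_one hr hp0 hp1 hf k
  have hk1 : (1 : ℝ) ≤ k := by exact_mod_cast hk
  have hC0 : 0 ≤ C := nonneg_of_mul_nonneg_left ((hT.trans_le (hC k)).le) hπ
  have hnum : |nbTail r p 1 k * nbCondExp r p f m - nbTail r p f k| ≤ nbTail r p 1 k :=
    abs_le.mpr ⟨by nlinarith [hE.1], by nlinarith [hE.2]⟩
  have hd : 0 < (k : ℝ) * nbPMF r p k := mul_pos (by positivity) hπ
  rw [nbSteinSol, abs_div, abs_of_pos hd, div_le_iff₀ hd]
  calc _ ≤ nbTail r p 1 k := hnum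
    _ ≤ C * nbPMF r p k := hC k
    _ ≤ C * (k * nbPMF r p k) := by gcongr; nlinarith

noncomputable def nbGreen (r p : ℝ) (n k j : ℕ) : ℝ :=
  (nbTail r p 1 k / nbTail r p 1 n * (if n ≤ j then 1 else 0) - (if k ≤ j then 1 else 0)) /
    (k * nbPMF r p k)

lemma exists_abs_nbGreen_le (n k : ℕ) : ∃ K, ∀ j, |nbGreen r p n k j| ≤ K :=
  ⟨(|nbTail r p 1 k / nbTail r p 1 n| + 1) / |k * nbPMF r p k|, fun j => by
    rw [nbGreen, abs_div]
    gcongr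
    refine (abs_sub _ _).trans (add_le_add ?_ ?_) <;> split_ifs <;> simp⟩

lemma nbGreen_of_lt {n k j : ℕ} (hj : j < n) (hk : n ≤ k) : nbGreen r p n k j = 0 := by
  simp [nbGreen, not_le.mpr hj, not_le.mpr (hj.trans_le hk)]

lemma nbSteinSol_eq_tsum_nbGreen (hr : 0 < r) (hp0 : 0 < p) (hp1 : p < 1) {f : ℕ → ℝ} {K : ℝ}
    (hf : ∀ j, |f j| ≤ K) (n k : ℕ) :
    nbSteinSol r p f n k = ∑' j, nbGreen r p n k j * f j * nbPMF r p j := by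
  have hterm : ∀ j, nbGreen r p n k j * f j * nbPMF r p j =
      (nbTail r p 1 k / nbTail r p 1 n * ((if n ≤ j then f j else 0) * nbPMF r p j) -
        (if k ≤ j then f j else 0) * nbPMF r p j) / (k * nbPMF r p k) := fun j => by
    simp only [nbGreen]
    split_ifs <;> ring
  rw [tsum_congr hterm, tsum_div_const, Summable.tsum_sub
    ((nbTail_summable hr hp0 hp1 hf n).mul_left _) (nbTail_summable hr hp0 hp1 hf k),
    tsum_mul_left, nbSteinSol, nbCondExp, ← nbTail, ← nbTail]
  ring

lemma exists_abs_nbSteinSol_add_le (hr : 0 < r) (hp0 : 0 < p) (hp1 : p < 1) {f : ℕ → ℝ}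
    (hf : ∀ j, f j ∈ Icc 0 1) (a b : ℝ) {n k l : ℕ} (hk : n ≤ k) (hl : n ≤ l) :
    ∃ B ⊆ Ici n, |a * nbSteinSol r p f n k + b * nbSteinSol r p f n l| ≤
      |a * nbSteinSol r p (B.indicator 1) n k + b * nbSteinSol r p (B.indicator 1) n l| := by
  obtain ⟨Kk, hKk⟩ := exists_abs_nbGreen_le (r := r) (p := p) n k
  obtain ⟨Kl, hKl⟩ := exists_abs_nbGreen_le (r := r) (p := p) n l
  set c := fun j => a * nbGreen r p n k j + b * nbGreen r p n l j
  have hc : ∀ j, |c j| ≤ |a| * Kk + |b| * Kl := fun j =>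
    (abs_add_le _ _).trans (by rw [abs_mul, abs_mul]; gcongr; exacts [hKk j, hKl j])
  have hπ0 := fun j => (nbPMF_pos hr hp0 hp1 j).le
  have hπ := nbPMF_summable hr hp0 hp1
  have hrep : ∀ g : ℕ → ℝ, (∀ j, g j ∈ Icc 0 1) →
      a * nbSteinSol r p g n k + b * nbSteinSol r p g n l = ∑' j, c j * g j * nbPMF r p j := by
    intro g hg
    have hg1 := abs_le_one_of_mem_Icc hg
    rw [nbSteinSol_eq_tsum_nbGreen hr hp0 hp1 hg1, nbSteinSol_eq_tsum_nbGreen hr hp0 hp1 hg1,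
      ← tsum_mul_left, ← tsum_mul_left, ← Summable.tsum_add]
    · exact tsum_congr fun j => by ring
    · exact (summable_mul_of_abs_le (fun j => abs_mul_le_of_abs_le_one (hKk j) (hg1 j)) hπ0
        hπ).mul_left a
    · exact (summable_mul_of_abs_le (fun j => abs_mul_le_of_abs_le_one (hKl j) (hg1 j)) hπ0
        hπ).mul_left b
  obtain ⟨B, hBc, hB⟩ := exists_abs_tsum_mul_le_indicator hc hf hπ0 hπ
  refine ⟨B, fun j hj => mem_Ici.mpr <| not_lt.mp fun hjn => hBc hj ?_, ?_⟩
  · simp [c, nbGreen_of_lt hjn hk, nbGreen_of_lt hjn hl]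
  · rwa [hrep f hf, hrep _ (indicator_one_mem_Icc B)]

noncomputable def nbSteinFactor (r p a b : ℝ) (m : ℕ) : ℝ :=
  sSup {x : ℝ | ∃ A : Set ℕ, A ⊆ Ici m ∧ ∃ g : ℕ → ℝ, IsNBSteinSol r p m A g ∧
    ∃ w : ℕ, m ≤ w ∧ x = |a * g (w + 1) + b * g (w + 2)|}

lemma nbG1_eq_nbSteinFactor (m : ℕ) : nbG1 r p m = nbSteinFactor r p 1 0 m := by
  simp [nbG1, nbSteinFactor]

lemma nbG2_eq_nbSteinFactor (m : ℕ) : nbG2 r p m = nbSteinFactor r p (-1) 1 m := by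
  simp [nbG2, nbSteinFactor, neg_add_eq_sub]

theorem nbSteinFactor_succ_le (hr : 0 < r) (hp0 : 0 < p) (hp1 : p < 1) (a b : ℝ) (n : ℕ) :
    nbSteinFactor r p a b (n + 1) ≤ nbSteinFactor r p a b n := by
  obtain ⟨C, hC⟩ := exists_nbTail_one_le hr hp0 hp1
  have hbdd : BddAbove {x : ℝ | ∃ A : Set ℕ, A ⊆ Ici n ∧ ∃ g : ℕ → ℝ, IsNBSteinSol r p n A g ∧
      ∃ w : ℕ, n ≤ w ∧ x = |a * g (w + 1) + b * g (w + 2)|} := by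
    refine ⟨|a| * C + |b| * C, ?_⟩
    rintro x ⟨A, -, g, hg, w, hw, rfl⟩
    rw [hg.eq_nbSteinSol hr hp0 hp1 (by omega : n < w + 1),
      hg.eq_nbSteinSol hr hp0 hp1 (by omega : n < w + 2)]
    refine (abs_add_le _ _).trans ?_
    rw [abs_mul, abs_mul]
    gcongr <;> exact abs_nbSteinSol_le hr hp0 hp1 (indicator_one_mem_Icc A) hC n (by omega)
  refine csSup_le ⟨_, ∅, empty_subset _, _, isNBSteinSol_nbSteinSol hr hp0 hp1 _ ∅, n + 1, le_rfl,
    rfl⟩ ?_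
  rintro x ⟨A, -, g, hg, w, hw, rfl⟩
  set θ := nbCondExp r p (A.indicator 1) (n + 1)
  have hθ := nbCondExp_mem_Icc hr hp0 hp1 (indicator_one_mem_Icc A) (n + 1)
  have hf : ∀ j, Function.update (A.indicator 1) n θ j ∈ Icc 0 1 := fun j => by
    rcases eq_or_ne j n with rfl | hj
    · simpa using hθ
    · simpa [Function.update_of_ne hj] using indicator_one_mem_Icc A j
  obtain ⟨B, hB, hle⟩ := exists_abs_nbSteinSol_add_le hr hp0 hp1 hf a b
    (n := n) (k := w + 1) (l := w + 2) (by omega) (by omega)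
  have hA1 := abs_le_one_of_mem_Icc (indicator_one_mem_Icc A)
  rw [nbSteinSol_update hr hp0 hp1 hA1 (k := w + 1) (by omega),
    nbSteinSol_update hr hp0 hp1 hA1 (k := w + 2) (by omega),
    ← hg.eq_nbSteinSol hr hp0 hp1 (by omega), ← hg.eq_nbSteinSol hr hp0 hp1 (by omega)] at hle
  exact le_csSup_of_le hbdd ⟨B, hB, _, isNBSteinSol_nbSteinSol hr hp0 hp1 n B, w, by omega, rfl⟩ hle

end NegBinomialStein

/-- For `r > 0` and `0 < p < 1`, the Stein factors `G_{m,1}` and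
`G_{m,2}` for conditional negative binomial approximation are decreasing in `m`. -/
theorem stmt12 (r p : ℝ) (hr : 0 < r) (hp0 : 0 < p) (hp1 : p < 1) :
    ∀ m : ℕ, 1 ≤ m →
      nbG1 r p m ≤ nbG1 r p (m - 1) ∧ nbG2 r p m ≤ nbG2 r p (m - 1) := by
  intro m hm
  obtain ⟨n, rfl⟩ := Nat.exists_eq_add_of_le' hm
  simp only [Nat.add_sub_cancel, nbG1_eq_nbSteinFactor, nbG2_eq_nbSteinFactor]
  exact ⟨nbSteinFactor_succ_le hr hp0 hp1 _ _ n, nbSteinFactor_succ_le hr hp0 hp1 _ _ n⟩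
end
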